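/- arXiv:1802.09511 — 2 statements merged into one kernel-verified Lean document; each statement's English description precedes it below -/
import Mathlib

section
/- Let B ∈ ℂ^{p×p} be a nonzero matrix with spectral radius ρ(B) < 1 and k = ‖B‖_0 nonzero entries. Then ϑ2(B) ≤ ϑ1(B) ≤ √(2k) · ϑ2(B). -/
open scoped BigOperators

noncomputable section

/-- The ℓ2→ℓ2 operator (spectral) norm of a matrix. -/
noncomputable def sNorm {𝕜 : Type*} [RCLike 𝕜] {m n : Type*} [Fintype m] [Fintype n]
    [DecidableEq n] (A : Matrix m n 𝕜) : ℝ :=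
  ‖LinearMap.toContinuousLinearMap (Matrix.toEuclideanLin A)‖

/-- The ℓ1→ℓ2 operator norm of a matrix: maximum Euclidean norm of a column. -/
noncomputable def colNorm {𝕜 : Type*} [RCLike 𝕜] {m n : Type*} [Fintype m] [Fintype n]
    (A : Matrix m n 𝕜) : ℝ :=
  ⨆ j : n, Real.sqrt (∑ i : m, ‖A i j‖ ^ 2)

/-- ϑ0(B) = max over the unit circle of the spectral norm of I - zB -/
noncomputable def theta0 {p : ℕ} (B : Matrix (Fin p) (Fin p) ℂ) : ℝ :=
  ⨆ z : {z : ℂ // ‖z‖ = 1}, sNorm ((1 : Matrix (Fin p) (Fin p) ℂ) - z.1 • B)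

/-- ϑ1(B) = max over the unit circle of the spectral norm of (I - zB)⁻¹ -/
noncomputable def theta1 {p : ℕ} (B : Matrix (Fin p) (Fin p) ℂ) : ℝ :=
  ⨆ z : {z : ℂ // ‖z‖ = 1}, sNorm (((1 : Matrix (Fin p) (Fin p) ℂ) - z.1 • B)⁻¹)

/-- ϑ2(B) = max over the unit circle of the 1→2 operator norm of (I - zB)⁻¹ -/
noncomputable def theta2 {p : ℕ} (B : Matrix (Fin p) (Fin p) ℂ) : ℝ :=
  ⨆ z : {z : ℂ // ‖z‖ = 1}, colNorm (((1 : Matrix (Fin p) (Fin p) ℂ) - z.1 • B)⁻¹)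

/-- spectral radius of a complex matrix, as a real number -/
noncomputable def rho {p : ℕ} (B : Matrix (Fin p) (Fin p) ℂ) : ℝ :=
  (spectralRadius ℂ B).toReal

/-- number of nonzero entries of a matrix -/
noncomputable def nnz {m n : Type*} {α : Type*} [Zero α] (A : Matrix m n α) : ℕ :=
  {ij : m × n | A ij.1 ij.2 ≠ 0}.ncard

/-- number of nonzero entries of a vector -/
noncomputable def vnnz {m : Type*} {α : Type*} [Zero α] (v : m → α) : ℕ :=
  {i : m | v i ≠ 0}.ncard

/-- maximum absolute column sum (operator norm induced by the ℓ1 vector norm) -/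
noncomputable def colSumNorm {𝕜 : Type*} [RCLike 𝕜] {m n : Type*} [Fintype m] [Fintype n]
    (A : Matrix m n 𝕜) : ℝ :=
  ⨆ j : n, ∑ i : m, ‖A i j‖

/-- maximum absolute row sum (operator norm induced by the ℓ∞ vector norm) -/
noncomputable def rowSumNorm {𝕜 : Type*} [RCLike 𝕜] {m n : Type*} [Fintype m] [Fintype n]
    (A : Matrix m n 𝕜) : ℝ :=
  ⨆ i : m, ∑ j : n, ‖A i j‖

/-!
Write `R = (1 - z • B)⁻¹` for `‖z‖ = 1`. A column of `R` is `R` applied to a unit vector, whence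
`ϑ2 ≤ ϑ1`. Conversely, let `T` be the set of nonzero columns of `B`, so `|T| ≤ k`. Split
`x = u + v` with `u` supported on `T` and `v` off `T`. Then `B v = 0`, hence `R v = v`, while
`‖R u‖ ≤ √|T| ϑ2 ‖u‖` by the triangle and Cauchy–Schwarz inequalities; so
`‖R x‖ ≤ √(1 + k ϑ2²) ‖x‖`. Finally `ϑ2 ≥ 1` by the maximum modulus principle applied to the
holomorphic entry `z ↦ R(z)ⱼⱼ` on the closed unit disc, which equals `1` at `z = 0`; as `k ≥ 1`,
`1 + k ϑ2² ≤ 2 k ϑ2²`.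
-/

open Matrix Metric
-- With these instances `‖A‖` unfolds to `sNorm A`.
open scoped Matrix.Norms.L2Operator

section ColumnNorms

variable {𝕜 : Type*} [RCLike 𝕜] {m n : Type*} [Fintype m]

lemma norm_toLp_col (A : Matrix m n 𝕜) (j : n) :
    ‖WithLp.toLp 2 (A.col j)‖ = √(∑ i, ‖A i j‖ ^ 2) :=
  EuclideanSpace.norm_eq _

variable [Fintype n]

lemma norm_toLp_col_le_colNorm (A : Matrix m n 𝕜) (j : n) :
    ‖WithLp.toLp 2 (A.col j)‖ ≤ colNorm A := by
  rw [norm_toLp_col]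
  exact le_ciSup (f := fun j ↦ √(∑ i, ‖A i j‖ ^ 2)) (Finite.bddAbove_range _) j

lemma colNorm_nonneg (A : Matrix m n 𝕜) : 0 ≤ colNorm A :=
  Real.iSup_nonneg fun j ↦ Real.sqrt_nonneg (∑ i, ‖A i j‖ ^ 2)

variable [DecidableEq n]

lemma norm_toLp_col_le_sNorm (A : Matrix m n 𝕜) (j : n) :
    ‖WithLp.toLp 2 (A.col j)‖ ≤ sNorm A := by
  have h := A.l2_opNorm_mulVec (PiLp.single 2 j 1)
  rwa [PiLp.norm_single, norm_one, mul_one, PiLp.ofLp_single, mulVec_single_one] at h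

lemma colNorm_le_sNorm (A : Matrix m n 𝕜) : colNorm A ≤ sNorm A :=
  Real.iSup_le (fun j ↦ norm_toLp_col A j ▸ norm_toLp_col_le_sNorm A j) (norm_nonneg _)

lemma sNorm_le_of_forall_norm_mulVec_le {A : Matrix m n 𝕜} {M : ℝ} (hM : 0 ≤ M)
    (h : ∀ x : n → 𝕜, ‖WithLp.toLp 2 (A *ᵥ x)‖ ≤ M * ‖WithLp.toLp 2 x‖) : sNorm A ≤ M :=
  ContinuousLinearMap.opNorm_le_bound _ hM fun x ↦ h x.ofLp

end ColumnNorms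

lemma mul_add_le_sqrt_mul_sqrt (s a b : ℝ) : s * a + b ≤ √(s ^ 2 + 1) * √(a ^ 2 + b ^ 2) := by
  simpa [Fin.sum_univ_two] using Real.sum_mul_le_sqrt_mul_sqrt Finset.univ ![s, 1] ![a, b]

section Sparse

open Finset

variable {𝕜 : Type*} [RCLike 𝕜] {m n : Type*} [Fintype m] [Fintype n]

lemma card_le_nnz_of_col_ne_zero {α : Type*} [Zero α] {B : Matrix m n α} {T : Finset n}
    (hT : ∀ j ∈ T, B.col j ≠ 0) : #T ≤ nnz B := by
  have hsub : (T : Set n) ⊆ Prod.snd '' {ij : m × n | B ij.1 ij.2 ≠ 0} := fun j hj ↦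
    let ⟨i, hi⟩ := Function.ne_iff.mp (hT j hj)
    ⟨(i, j), hi, rfl⟩
  rw [← Set.ncard_coe_finset]
  exact (Set.ncard_le_ncard hsub (Set.toFinite _)).trans (Set.ncard_image_le (Set.toFinite _))

lemma norm_toLp_mulVec_le_of_support {A : Matrix m n 𝕜} {T : Finset n} {x : n → 𝕜}
    (hx : ∀ j ∉ T, x j = 0) :
    ‖WithLp.toLp 2 (A *ᵥ x)‖ ≤ √(#T : ℝ) * colNorm A * ‖WithLp.toLp 2 x‖ := by
  have hsum : WithLp.toLp 2 (A *ᵥ x) = ∑ j ∈ T, x j • WithLp.toLp 2 (A.col j) := by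
    ext i
    simp only [mulVec, dotProduct, WithLp.ofLp_sum, WithLp.ofLp_smul, Finset.sum_apply,
      Pi.smul_apply, col_apply, smul_eq_mul, mul_comm]
    exact (sum_subset (subset_univ T) fun j _ hj ↦ by simp [hx j hj]).symm
  have hcs : ∑ j ∈ T, ‖x j‖ ≤ √(#T : ℝ) * ‖WithLp.toLp 2 x‖ := by
    have h := Real.sum_mul_le_sqrt_mul_sqrt T (fun _ ↦ 1) (fun j ↦ ‖x j‖)
    have hsq : ∑ j ∈ T, ‖x j‖ ^ 2 = ∑ j, ‖x j‖ ^ 2 :=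
      sum_subset (subset_univ T) fun j _ hj ↦ by simp [hx j hj]
    simpa [hsq, EuclideanSpace.norm_eq] using h
  calc ‖WithLp.toLp 2 (A *ᵥ x)‖ ≤ ∑ j ∈ T, ‖x j‖ * colNorm A := by
        rw [hsum]
        refine (norm_sum_le _ _).trans (sum_le_sum fun j _ ↦ ?_)
        rw [norm_smul]
        gcongr
        exact norm_toLp_col_le_colNorm A j
    _ = colNorm A * ∑ j ∈ T, ‖x j‖ := by rw [← sum_mul, mul_comm]
    _ ≤ colNorm A * (√(#T : ℝ) * ‖WithLp.toLp 2 x‖) := by gcongr; exact colNorm_nonneg A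
    _ = √(#T : ℝ) * colNorm A * ‖WithLp.toLp 2 x‖ := by ring

variable [DecidableEq n]

lemma sNorm_le_sqrt_one_add_nnz_mul_sq {R : Matrix n n 𝕜} {B : Matrix m n 𝕜}
    (hR : ∀ v, B *ᵥ v = 0 → R *ᵥ v = v) :
    sNorm R ≤ √(1 + nnz B * colNorm R ^ 2) := by
  classical
  set T := univ.filter fun j ↦ B.col j ≠ 0
  have hT : (#T : ℝ) ≤ nnz B :=
    mod_cast card_le_nnz_of_col_ne_zero fun j hj ↦ (mem_filter.mp hj).2
  refine sNorm_le_of_forall_norm_mulVec_le (Real.sqrt_nonneg _) fun x ↦ ?_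
  set u : n → 𝕜 := fun j ↦ if j ∈ T then x j else 0
  set v : n → 𝕜 := fun j ↦ if j ∈ T then 0 else x j
  have hBv : B *ᵥ v = 0 := by
    ext i
    refine sum_eq_zero fun j _ ↦ ?_
    by_cases hj : j ∈ T
    · simp [v, hj]
    · have hcol : B.col j = 0 := by simpa [T] using hj
      simp [show B i j = 0 from congrFun hcol i]
  have hRx : R *ᵥ x = R *ᵥ u + v := by
    rw [← hR v hBv, ← mulVec_add]
    congr
    ext j
    by_cases hj : j ∈ T <;> simp [u, v, hj]
  have hpyth : ‖WithLp.toLp 2 u‖ ^ 2 + ‖WithLp.toLp 2 v‖ ^ 2 = ‖WithLp.toLp 2 x‖ ^ 2 := by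
    simp only [EuclideanSpace.norm_sq_eq, ← sum_add_distrib]
    refine sum_congr rfl fun j _ ↦ ?_
    by_cases hj : j ∈ T <;> simp [u, v, hj]
  have hRu : ‖WithLp.toLp 2 (R *ᵥ u)‖ ≤ √(nnz B) * colNorm R * ‖WithLp.toLp 2 u‖ :=
    (norm_toLp_mulVec_le_of_support (T := T) fun j hj ↦ by simp [u, hj]).trans
      (by gcongr; exact colNorm_nonneg R)
  calc ‖WithLp.toLp 2 (R *ᵥ x)‖ ≤ ‖WithLp.toLp 2 (R *ᵥ u)‖ + ‖WithLp.toLp 2 v‖ := by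
        rw [hRx, WithLp.toLp_add]
        exact norm_add_le _ _
    _ ≤ √(nnz B) * colNorm R * ‖WithLp.toLp 2 u‖ + ‖WithLp.toLp 2 v‖ := by gcongr
    _ ≤ √((√(nnz B) * colNorm R) ^ 2 + 1) *
          √(‖WithLp.toLp 2 u‖ ^ 2 + ‖WithLp.toLp 2 v‖ ^ 2) := mul_add_le_sqrt_mul_sqrt _ _ _
    _ = √(1 + nnz B * colNorm R ^ 2) * ‖WithLp.toLp 2 x‖ := by
        rw [hpyth, Real.sqrt_sq (norm_nonneg _), mul_pow, Real.sq_sqrt (Nat.cast_nonneg _),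
          add_comm]

end Sparse

lemma Matrix.inv_mulVec_eq_of_mulVec_eq {R : Type*} [CommRing R] {n : Type*} [Fintype n]
    [DecidableEq n] {A : Matrix n n R} (hA : IsUnit A) {v : n → R} (hv : A *ᵥ v = v) :
    A⁻¹ *ᵥ v = v := by
  conv_lhs => rw [← hv]
  rw [mulVec_mulVec, nonsing_inv_mul _ ((isUnit_iff_isUnit_det A).mp hA), one_mulVec]

section Resolvent

variable {n : Type*} [Fintype n] [DecidableEq n] {B : Matrix n n ℂ}

lemma isUnit_one_sub_smul_of_spectralRadius_lt_one (hB : spectralRadius ℂ B < 1) {z : ℂ}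
    (hz : ‖z‖ ≤ 1) : IsUnit (1 - z • B) :=
  spectrum.isUnit_one_sub_smul_of_lt_inv_radius <|
    lt_of_le_of_lt (by exact_mod_cast hz) (ENNReal.one_lt_inv.mpr hB)

lemma differentiableOn_inv_one_sub_smul (hB : spectralRadius ℂ B < 1) :
    DifferentiableOn ℂ (fun z : ℂ ↦ (1 - z • B)⁻¹) (closedBall 0 1) := by
  have h := spectrum.differentiableOn_inverse_one_sub_smul (𝕜 := ℂ) (a := B) (r := 1)
    (by simpa using ENNReal.one_lt_inv.mpr hB)
  rw [NNReal.coe_one] at h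
  simp only [nonsing_inv_eq_ringInverse]
  exact h

lemma bddAbove_sNorm_inv_one_sub_smul (hB : spectralRadius ℂ B < 1) :
    BddAbove (Set.range fun z : {z : ℂ // ‖z‖ = 1} ↦ sNorm ((1 - z.1 • B)⁻¹)) := by
  obtain ⟨C, hC⟩ := (isCompact_closedBall (0 : ℂ) 1).exists_bound_of_continuousOn
    (differentiableOn_inv_one_sub_smul hB).continuousOn
  exact ⟨C, by rintro _ ⟨z, rfl⟩; exact hC z (by simp [z.2])⟩

lemma exists_one_le_norm_inv_one_sub_smul_apply (hB : spectralRadius ℂ B < 1) (j : n) :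
    ∃ z : ℂ, ‖z‖ = 1 ∧ 1 ≤ ‖(1 - z • B)⁻¹ j j‖ := by
  have hd : DiffContOnCl ℂ (fun z : ℂ ↦ (1 - z • B)⁻¹ j j) (ball 0 1) := by
    refine DifferentiableOn.diffContOnCl ?_
    rw [closure_ball 0 one_ne_zero]
    exact (entryLinearMap ℂ ℂ j j).toContinuousLinearMap.differentiable.comp_differentiableOn
      (differentiableOn_inv_one_sub_smul hB)
  obtain ⟨z, hz, hmax⟩ :=
    Complex.exists_mem_frontier_isMaxOn_norm isBounded_ball ⟨0, mem_ball_self one_pos⟩ hd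
  rw [frontier_ball 0 one_ne_zero, mem_sphere_zero_iff_norm] at hz
  refine ⟨z, hz, ?_⟩
  simpa using hmax (subset_closure (mem_ball_self one_pos))

end Resolvent

lemma nnz_pos {m n α : Type*} [Finite m] [Finite n] [Zero α] {B : Matrix m n α} {i : m} {j : n}
    (hij : B i j ≠ 0) : 0 < nnz B :=
  (Set.ncard_pos (Set.toFinite _)).mpr ⟨(i, j), hij⟩

section Theta

variable {p : ℕ} {B : Matrix (Fin p) (Fin p) ℂ}

instance instNonemptyNormEqOne : Nonempty {z : ℂ // ‖z‖ = 1} := ⟨⟨1, norm_one⟩⟩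

lemma bddAbove_colNorm_inv_one_sub_smul (hB : spectralRadius ℂ B < 1) :
    BddAbove (Set.range fun z : {z : ℂ // ‖z‖ = 1} ↦ colNorm ((1 - z.1 • B)⁻¹)) :=
  (bddAbove_sNorm_inv_one_sub_smul hB).range_mono _ fun _ ↦ colNorm_le_sNorm _

lemma theta2_le_theta1 (hB : spectralRadius ℂ B < 1) : theta2 B ≤ theta1 B :=
  ciSup_mono (bddAbove_sNorm_inv_one_sub_smul hB) fun _ ↦ colNorm_le_sNorm _

lemma one_le_theta2 (hB : spectralRadius ℂ B < 1) (j : Fin p) : 1 ≤ theta2 B := by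
  obtain ⟨z, hz, hjj⟩ := exists_one_le_norm_inv_one_sub_smul_apply hB j
  calc 1 ≤ ‖(1 - z • B)⁻¹ j j‖ := hjj
    _ ≤ ‖WithLp.toLp 2 (((1 - z • B)⁻¹).col j)‖ :=
        PiLp.norm_apply_le (WithLp.toLp 2 (((1 - z • B)⁻¹).col j)) j
    _ ≤ colNorm ((1 - z • B)⁻¹) := norm_toLp_col_le_colNorm _ j
    _ ≤ theta2 B := le_ciSup (bddAbove_colNorm_inv_one_sub_smul hB) ⟨z, hz⟩

lemma sNorm_inv_one_sub_smul_le (hB : spectralRadius ℂ B < 1) (z : {z : ℂ // ‖z‖ = 1}) :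
    sNorm ((1 - z.1 • B)⁻¹) ≤ √(1 + nnz B * theta2 B ^ 2) := by
  refine (sNorm_le_sqrt_one_add_nnz_mul_sq (B := B) fun v hv ↦ ?_).trans ?_
  · refine inv_mulVec_eq_of_mulVec_eq (isUnit_one_sub_smul_of_spectralRadius_lt_one hB z.2.le) ?_
    rw [sub_mulVec, one_mulVec, smul_mulVec, hv, smul_zero, sub_zero]
  · gcongr
    · exact colNorm_nonneg _
    · exact le_ciSup (bddAbove_colNorm_inv_one_sub_smul hB) z

end Theta

/-- for a nonzero B with ρ(B) < 1 and k nonzero entries,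
ϑ2(B) ≤ ϑ1(B) ≤ √(2k) ϑ2(B). -/
theorem stmt10 {p : ℕ} (B : Matrix (Fin p) (Fin p) ℂ) (hB : B ≠ 0)
    (hρ : spectralRadius ℂ B < 1) (k : ℕ) (hk : k = nnz B) :
    theta2 B ≤ theta1 B ∧ theta1 B ≤ Real.sqrt (2 * k) * theta2 B := by
  obtain ⟨i, j, hij⟩ : ∃ i j, B i j ≠ 0 := by simpa [← Matrix.ext_iff] using hB
  have hθ2 : 1 ≤ theta2 B := one_le_theta2 hρ j
  have hk1 : (1 : ℝ) ≤ k := by exact_mod_cast hk ▸ nnz_pos hij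
  refine ⟨theta2_le_theta1 hρ, ciSup_le fun z ↦ ?_⟩
  calc sNorm ((1 - z.1 • B)⁻¹) ≤ √(1 + k * theta2 B ^ 2) := hk ▸ sNorm_inv_one_sub_smul_le hρ z
    _ ≤ √(2 * k * theta2 B ^ 2) := by gcongr; nlinarith
    _ = √(2 * k) * theta2 B := by rw [Real.sqrt_mul (by positivity), Real.sqrt_sq (by positivity)]
end
end

section
/- Let v ∈ ℝ^p, n ≥ 1, M ∈ ℝ^{pn×pn}, and set Ψ = (I_n ⊗ diag(v)) M, where ⊗ is the Kronecker product and diag(v) the diagonal matrix with diagonal v. Then ‖Ψ'Ψ‖_F² ≤ n ‖v‖_0 ‖Ψ‖₂⁴, where ‖v‖_0 is the number of nonzero entries of v. -/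
open Matrix
open scoped BigOperators Kronecker

/-!
Column by column, `ΨᵀΨ` is `Ψᵀ` applied to the columns of `Ψ`, so `‖ΨᵀΨ‖_F ≤ ‖Ψ‖₂ ‖Ψ‖_F`.
Row `(i, k)` of `Ψ` is `v k` times the corresponding row of `M`, so at most `n ‖v‖₀` rows of `Ψ`
are nonzero, and each row has Euclidean norm at most `‖Ψᵀ‖₂ = ‖Ψ‖₂`; hence
`‖Ψ‖_F² ≤ n ‖v‖₀ ‖Ψ‖₂²`.
-/

section SpectralNorm

open scoped Matrix.Norms.L2Operator

variable {l m n : Type*} [Fintype l] [Fintype m] [Fintype n]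

theorem sNorm_eq_l2_opNorm [DecidableEq n] (A : Matrix m n ℝ) : sNorm A = ‖A‖ := rfl

theorem sum_sq_mulVec_le [DecidableEq n] (A : Matrix m n ℝ) (x : n → ℝ) :
    ∑ i, (A *ᵥ x) i ^ 2 ≤ sNorm A ^ 2 * ∑ j, x j ^ 2 := by
  have h := pow_le_pow_left₀ (norm_nonneg _) (A.l2_opNorm_mulVec (WithLp.toLp 2 x)) 2
  rwa [mul_pow, EuclideanSpace.real_norm_sq_eq, EuclideanSpace.real_norm_sq_eq] at h

theorem sNorm_transpose [DecidableEq m] [DecidableEq n] (A : Matrix m n ℝ) :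
    sNorm Aᵀ = sNorm A := by
  rw [sNorm_eq_l2_opNorm, sNorm_eq_l2_opNorm, ← conjTranspose_eq_transpose_of_trivial,
    l2_opNorm_conjTranspose]

theorem sum_sq_row_le [DecidableEq m] [DecidableEq n] (A : Matrix m n ℝ) (i : m) :
    ∑ j, A i j ^ 2 ≤ sNorm A ^ 2 := by
  have h := sum_sq_mulVec_le Aᵀ (Pi.single i 1)
  simpa [mulVec_single_one, sNorm_transpose, Pi.single_apply] using h

theorem sum_sq_mul_le [DecidableEq m] (A : Matrix l m ℝ) (B : Matrix m n ℝ) :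
    ∑ i, ∑ j, (A * B) i j ^ 2 ≤ sNorm A ^ 2 * ∑ k, ∑ j, B k j ^ 2 := by
  rw [Finset.sum_comm, Finset.sum_comm (f := fun k j => B k j ^ 2), Finset.mul_sum]
  exact Finset.sum_le_sum fun j _ => sum_sq_mulVec_le A fun k => B k j

theorem sum_sq_le_card_mul_sNorm_sq [DecidableEq m] [DecidableEq n] (A : Matrix m n ℝ)
    (s : Finset m) (hs : ∀ i ∉ s, ∀ j, A i j = 0) :
    ∑ i, ∑ j, A i j ^ 2 ≤ s.card * sNorm A ^ 2 := by
  rw [← Finset.sum_subset (Finset.subset_univ s) fun i _ hi => by simp [hs i hi]]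
  simpa using Finset.sum_le_card_nsmul s _ _ fun i _ => sum_sq_row_le A i

end SpectralNorm

theorem one_kronecker_diagonal_mul_apply {R m n : Type*} [Semiring R] [Fintype m] [Fintype n]
    [DecidableEq m] [DecidableEq n] (v : n → R) (M : Matrix (m × n) (m × n) R) (i j : m × n) :
    (((1 : Matrix m m R) ⊗ₖ diagonal v) * M) i j = v i.2 * M i j := by
  rw [← diagonal_one, diagonal_kronecker_diagonal, diagonal_mul, one_mul]

theorem card_univ_product_filter_ne_zero {α m n : Type*} [Zero α] [DecidableEq α] [Fintype m]
    [Fintype n] (v : n → α) :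
    ((Finset.univ : Finset m) ×ˢ ({k | v k ≠ 0} : Finset n)).card = Fintype.card m * vnnz v := by
  rw [Finset.card_product, Finset.card_univ, vnnz, Set.ncard_eq_toFinset_card', Set.toFinset_ofPred]

theorem stmt17_general {p : ℕ} (v : Fin p → ℝ) (n : ℕ)
    (M : Matrix (Fin n × Fin p) (Fin n × Fin p) ℝ) :
    let Ψ : Matrix (Fin n × Fin p) (Fin n × Fin p) ℝ :=
      ((1 : Matrix (Fin n) (Fin n) ℝ) ⊗ₖ Matrix.diagonal v) * M
    ∑ i, ∑ j, ((Ψᵀ * Ψ) i j) ^ 2 ≤ (n : ℝ) * (vnnz v : ℝ) * sNorm Ψ ^ 4 := by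
  intro Ψ
  set S := (Finset.univ : Finset (Fin n)) ×ˢ ({k | v k ≠ 0} : Finset (Fin p))
  have hrows : ∀ i ∉ S, ∀ j, Ψ i j = 0 := fun i hi j => by
    have hv : v i.2 = 0 := by simpa [S] using hi
    simp [Ψ, one_kronecker_diagonal_mul_apply, hv]
  have hS : (S.card : ℝ) = n * vnnz v := by
    simp only [S, card_univ_product_filter_ne_zero, Fintype.card_fin, Nat.cast_mul]
  calc ∑ i, ∑ j, (Ψᵀ * Ψ) i j ^ 2
      ≤ sNorm Ψᵀ ^ 2 * ∑ k, ∑ j, Ψ k j ^ 2 := sum_sq_mul_le Ψᵀ Ψ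
    _ ≤ sNorm Ψ ^ 2 * (S.card * sNorm Ψ ^ 2) := by
      rw [sNorm_transpose]
      gcongr
      exact sum_sq_le_card_mul_sNorm_sq Ψ S hrows
    _ = n * vnnz v * sNorm Ψ ^ 4 := by rw [hS]; ring

/-- for Ψ = (I_n ⊗ diag(v)) M, ‖Ψ'Ψ‖_F² ≤ n ‖v‖_0 ‖Ψ‖₂⁴. -/
theorem stmt17 {p : ℕ} (v : Fin p → ℝ) (n : ℕ) (hn : 1 ≤ n)
    (M : Matrix (Fin n × Fin p) (Fin n × Fin p) ℝ) :
    let Ψ : Matrix (Fin n × Fin p) (Fin n × Fin p) ℝ :=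
      ((1 : Matrix (Fin n) (Fin n) ℝ) ⊗ₖ Matrix.diagonal v) * M
    ∑ i, ∑ j, ((Ψᵀ * Ψ) i j) ^ 2 ≤ (n : ℝ) * (vnnz v : ℝ) * sNorm Ψ ^ 4 :=
  stmt17_general v n M
end
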